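/- Every expressible finite poset admits no full order embedding of the zigzag poset Z. -/

import Mathlib

open scoped NNReal

/-- The join of two posets: underlying set the disjoint union, with every
element of the first below every element of the second. -/
def Join (α β : Type) : Type := α ⊕ β

/-- Package a sum element as an element of the join. -/
def Join.mk {α β : Type} : α ⊕ β → Join α β := id

/-- Unpack an element of the join. -/
def Join.out {α β : Type} : Join α β → α ⊕ β := id

/-- The order relation of the join. -/
def joinLE {α β : Type} [LE α] [LE β] : α ⊕ β → α ⊕ β → Prop
  | .inl a, .inl a' => a ≤ a'
  | .inr b, .inr b' => b ≤ b'
  | .inl _, .inr _ => True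
  | .inr _, .inl _ => False

instance Join.instPartialOrder {α β : Type} [PartialOrder α] [PartialOrder β] :
    PartialOrder (Join α β) where
  le x y := joinLE (Join.out x) (Join.out y)
  le_refl x := by rcases hx : Join.out x with a | b <;> simp [hx, joinLE]
  le_trans x y z hxy hyz := by
    rcases hx : Join.out x with a | a <;> rcases hy : Join.out y with b | b <;>
      rcases hz : Join.out z with c | c <;>
      simp_all [joinLE] <;> exact le_trans hxy hyz
  le_antisymm x y hxy hyx := by
    have : Join.out x = Join.out y := by
      rcases hx : Join.out x with a | a <;> rcases hy : Join.out y with b | b <;>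
        simp_all [joinLE] <;> exact le_antisymm hxy hyx
    exact this

/-- The disjoint-union partial order on a sum type (no cross relations). -/
def disjOrder (α β : Type) [PartialOrder α] [PartialOrder β] : PartialOrder (α ⊕ β) :=
  inferInstance

/-- The class of expressible posets: generated from empty and singleton posets by
disjoint unions and joins, closed under order isomorphism. -/
inductive Expressible : ∀ (α : Type), PartialOrder α → Prop
  | empty (α : Type) [IsEmpty α] (o : PartialOrder α) : Expressible α o
  | single (α : Type) [Unique α] (o : PartialOrder α) : Expressible α o
  | disj {α β : Type} [oa : PartialOrder α] [ob : PartialOrder β] :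
      Expressible α oa → Expressible β ob → Expressible (α ⊕ β) (disjOrder α β)
  | join {α β : Type} [oa : PartialOrder α] [ob : PartialOrder β] :
      Expressible α oa → Expressible β ob → Expressible (Join α β) Join.instPartialOrder
  | iso {α β : Type} (oa : PartialOrder α) (ob : PartialOrder β) (e : α ≃ β)
      (he : ∀ x y, oa.le x y ↔ ob.le (e x) (e y)) :
      Expressible α oa → Expressible β ob

/-- The order relation of the zigzag poset `Z` on four elements `0,1,2,3`
(thought of as `a,b,c,d`): exactly `a < b`, `c < b`, `c < d`. -/
abbrev ZLE : Fin 4 → Fin 4 → Prop := fun x y =>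
  x = y ∨ (x = 0 ∧ y = 1) ∨ (x = 2 ∧ y = 1) ∨ (x = 2 ∧ y = 3)

theorem ZLE.refl : ∀ a, ZLE a a := by decide
theorem ZLE.trans : ∀ a b c, ZLE a b → ZLE b c → ZLE a c := by decide
theorem ZLE.antisymm : ∀ a b, ZLE a b → ZLE b a → a = b := by decide

/-- The zigzag poset `Z`. -/
def ZOrder : PartialOrder (Fin 4) where
  le := ZLE
  lt a b := ZLE a b ∧ ¬ ZLE b a
  lt_iff_le_not_ge _ _ := Iff.rfl
  le_refl := ZLE.refl
  le_trans := ZLE.trans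
  le_antisymm := ZLE.antisymm

/-- A poset admits no full embedding of the zigzag `Z`: there is no injective map
from `Z` that both preserves and reflects the order. -/
def NoZFullEmbedding (α : Type) [PartialOrder α] : Prop :=
  ¬ ∃ f : Fin 4 → α, Function.Injective f ∧ ∀ x y : Fin 4, ZLE x y ↔ f x ≤ f y

/-- Lexicographic substitution of the posets `Q i` into the poset `P`. -/
def SubstOrder {ι : Type} (P : PartialOrder ι) {β : ι → Type}
    (Q : ∀ i, PartialOrder (β i)) : PartialOrder (Σ i, β i) :=
  letI := P
  letI : ∀ i, PartialOrder (β i) := Q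
  inferInstanceAs (PartialOrder (Σₗ i, β i))

/-- The tropical dependence operation: maximal chain-sum of weights over a poset. -/
noncomputable def tropBox {ι : Type} (P : PartialOrder ι) (a : ι → ℝ≥0) : ℝ≥0 :=
  sSup {s : ℝ≥0 | ∃ l : List ι, l.Chain' (fun i j => P.lt i j) ∧ s = (l.map a).sum}

/-- The discrete partial order. -/
def discreteOrder (ι : Type) : PartialOrder ι where
  le x y := x = y
  le_refl _ := rfl
  le_trans _ _ _ h h' := Eq.trans h h'
  le_antisymm _ _ h _ := h

/-- Connectivity of a poset: any two elements are joined by a zigzag of comparisons. -/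
def PosetConnected (α : Type) [PartialOrder α] : Prop :=
  ∀ x y : α, Relation.ReflTransGen (fun u v : α => u ≤ v ∨ v ≤ u) x y

/-
In a disjoint union comparable elements lie in the same summand, and in a join incomparable
elements do. The comparability graph of `Z` (the path `a – b – c – d`) and its incomparability
graph (the path `c – a – d – b`) are both connected, so a full copy of `Z` in `P ⊔ Q` or
`P ⋈ Q` lies entirely in `P` or in `Q`. Induction on expressibility then finishes, the base
cases having fewer than four elements.
-/
lemma Sum.forall_mem_range_inl_or_inr {α β ι : Type} {f : ι → α ⊕ β} (i₀ : ι)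
    (h : ∀ i, (f i).isLeft = (f i₀).isLeft) :
    (∀ i, f i ∈ Set.range Sum.inl) ∨ (∀ i, f i ∈ Set.range Sum.inr) := by
  cases hi₀ : (f i₀).isLeft
  · exact .inr fun i => Sum.isRight_iff.1 (Sum.isLeft_eq_false.1 ((h i).trans hi₀)) |>.imp
      fun _ => Eq.symm
  · exact .inl fun i => Sum.isLeft_iff.1 ((h i).trans hi₀) |>.imp fun _ => Eq.symm

section
variable {α β γ : Type} [PartialOrder α] [PartialOrder β] [PartialOrder γ]

def IsZFullEmbedding (f : Fin 4 → α) : Prop := ∀ x y, ZLE x y ↔ f x ≤ f y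

lemma IsZFullEmbedding.injective {f : Fin 4 → α} (hf : IsZFullEmbedding f) :
    Function.Injective f :=
  fun x y h => ZLE.antisymm x y ((hf x y).2 h.le) ((hf y x).2 h.ge)

lemma noZFullEmbedding_iff :
    NoZFullEmbedding α ↔ ∀ f : Fin 4 → α, ¬ IsZFullEmbedding f :=
  ⟨fun h f hf => h ⟨f, hf.injective, hf⟩, fun h ⟨f, _, hf⟩ => h f hf⟩

lemma isZFullEmbedding_comp_iff (e : α ↪o β) {f : Fin 4 → α} :
    IsZFullEmbedding (e ∘ f) ↔ IsZFullEmbedding f := by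
  simp only [IsZFullEmbedding, Function.comp_apply, e.le_iff_le]

lemma NoZFullEmbedding.of_orderEmbedding (e : α ↪o β) (h : NoZFullEmbedding β) :
    NoZFullEmbedding α := by
  rw [noZFullEmbedding_iff] at h ⊢
  exact fun f hf => h (e ∘ f) ((isZFullEmbedding_comp_iff e).2 hf)

lemma noZFullEmbedding_of_subsingleton [Subsingleton α] : NoZFullEmbedding α :=
  fun ⟨f, hinj, _⟩ => absurd (hinj (Subsingleton.elim (f 0) (f 1))) (by decide)

lemma IsZFullEmbedding.not_forall_mem_range (hα : NoZFullEmbedding α) (e : α ↪o γ)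
    {f : Fin 4 → γ} (hf : IsZFullEmbedding f) : ¬ ∀ i, f i ∈ Set.range e := by
  intro h
  choose g hg using h
  have hfg : ⇑e ∘ g = f := funext hg
  exact noZFullEmbedding_iff.1 hα g ((isZFullEmbedding_comp_iff e).1 (hfg ▸ hf))

lemma Sum.isLeft_eq_of_le {x y : α ⊕ β} (h : x ≤ y) : x.isLeft = y.isLeft :=
  Bool.eq_iff_iff.2 (Sum.LiftRel.isLeft_congr h)

lemma Join.isLeft_out_eq_of_not_le_of_not_le {x y : Join α β} (hxy : ¬ x ≤ y)
    (hyx : ¬ y ≤ x) : x.out.isLeft = y.out.isLeft := by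
  rcases hx : x.out with a | b <;> rcases hy : y.out with a' | b' <;>
    simp_all [LE.le, joinLE]

lemma noZFullEmbedding_sum (hα : NoZFullEmbedding α) (hβ : NoZFullEmbedding β) :
    NoZFullEmbedding (α ⊕ β) := by
  refine noZFullEmbedding_iff.2 fun f hf => ?_
  have side {i j} (hij : ZLE i j) : (f i).isLeft = (f j).isLeft :=
    Sum.isLeft_eq_of_le ((hf i j).1 hij)
  have h10 : (f 1).isLeft = (f 0).isLeft := (side (by decide : ZLE 0 1)).symm
  have h21 : (f 2).isLeft = (f 1).isLeft := side (by decide : ZLE 2 1)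
  have h32 : (f 3).isLeft = (f 2).isLeft := (side (by decide : ZLE 2 3)).symm
  have hside : ∀ i, (f i).isLeft = (f 0).isLeft := by
    intro i
    fin_cases i
    exacts [rfl, h10, h21.trans h10, h32.trans (h21.trans h10)]
  rcases Sum.forall_mem_range_inl_or_inr 0 hside with h | h
  · exact hf.not_forall_mem_range hα (.ofMapLEIff Sum.inl fun _ _ => Sum.inl_le_inl_iff) h
  · exact hf.not_forall_mem_range hβ (.ofMapLEIff Sum.inr fun _ _ => Sum.inr_le_inr_iff) h

lemma noZFullEmbedding_join (hα : NoZFullEmbedding α) (hβ : NoZFullEmbedding β) :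
    NoZFullEmbedding (Join α β) := by
  refine noZFullEmbedding_iff.2 fun f hf => ?_
  have side {i j} (hij : ¬ ZLE i j) (hji : ¬ ZLE j i) : (f i).out.isLeft = (f j).out.isLeft :=
    Join.isLeft_out_eq_of_not_le_of_not_le (mt (hf i j).2 hij) (mt (hf j i).2 hji)
  have h20 : (f 2).out.isLeft = (f 0).out.isLeft := side (by decide) (by decide)
  have h30 : (f 3).out.isLeft = (f 0).out.isLeft := side (by decide) (by decide)
  have h13 : (f 1).out.isLeft = (f 3).out.isLeft := side (by decide) (by decide)
  have hside : ∀ i, (f i).out.isLeft = (f 0).out.isLeft := by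
    intro i
    fin_cases i
    exacts [rfl, h13.trans h30, h20, h30]
  rcases Sum.forall_mem_range_inl_or_inr 0 hside with h | h
  · exact hf.not_forall_mem_range hα
      (.ofMapLEIff (fun a => Join.mk (.inl a)) fun _ _ => Iff.rfl) h
  · exact hf.not_forall_mem_range hβ
      (.ofMapLEIff (fun b => Join.mk (.inr b)) fun _ _ => Iff.rfl) h

end

/-- Every expressible poset admits no full embedding of the zigzag `Z`. -/
theorem expressible_noZ {α : Type} {o : PartialOrder α} (h : Expressible α o) :
    @NoZFullEmbedding α o := by
  induction h with
  | empty => exact noZFullEmbedding_of_subsingleton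
  | single => exact noZFullEmbedding_of_subsingleton
  | disj _ _ ihα ihβ => exact noZFullEmbedding_sum ihα ihβ
  | join _ _ ihα ihβ => exact noZFullEmbedding_join ihα ihβ
  | iso oa ob e he _ ih =>
    let := oa
    let := ob
    exact ih.of_orderEmbedding (OrderIso.symm ⟨e, (he _ _).symm⟩).toOrderEmbedding
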